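/- For each integer k ≥ 2, let π(k) be the PageRank vector of Γ(k) for α = 1 − 1/k. Then π(k)_{C1} → 2/5 and π(k)_{C2} → 2/5 as k → ∞. -/

import Mathlib

/-!
Write `s = (1 - α)/(k + 3)` for the teleportation mass. Every vertex except `A` links to `C1`
and to `C2`, so these two rows of `R_α` coincide, and by `∑ π = 1` the equation at `C1` reads
`π_C1 = s + α/3 (1 - π_A) + α/6 π_C1`. Along the path `C2 → B1 → ⋯ → Bk` each vertex only
receives a third of its predecessor's rank, so `π_Bk ≤ 3⁻ᵏ + 3s/2`, while `A` keeps its own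
rank: `(1 - α) π_A = s + α/3 π_Bk`. For `α = 1 - 1/k` this gives
`π_A ≤ 3/(2(k + 3)) + k 3⁻⁽ᵏ⁺¹⁾ → 0`, and letting `α → 1` in the equation at `C1` gives
`π_C1 → (1/3)/(1 - 1/6) = 2/5`.
-/

/-- Arc relation of the graph `Γ(k)` on vertex indices `0, ..., k+2`, where
vertex `0` is `C1`, vertex `1` is `C2`, vertex `i+1` is `B_i` for `1 ≤ i ≤ k`,
and vertex `k+2` is `A`.  `PRadj k j i` holds iff there is an arc from `j` to `i`. -/
def PRadj (k j i : ℕ) : Prop :=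
  (j = 0 ∧ (i = 0 ∨ i = 1)) ∨
  (j = 1 ∧ (i = 0 ∨ i = 1 ∨ i = 2)) ∨
  (2 ≤ j ∧ j ≤ k + 1 ∧ (i = 0 ∨ i = 1 ∨ i = j + 1)) ∨
  (j = k + 2 ∧ i = k + 2)

instance (k j i : ℕ) : Decidable (PRadj k j i) := by unfold PRadj; infer_instance

def PRdeg (k j : ℕ) : ℕ := if j = 0 then 2 else if j = k + 2 then 1 else 3

noncomputable def PRmat (k : ℕ) (α : ℝ) : Matrix (Fin (k + 3)) (Fin (k + 3)) ℝ :=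
  fun i j =>
    if PRadj k j.1 i.1 then α / (PRdeg k j.1 : ℝ) + (1 - α) / ((k : ℝ) + 3)
    else (1 - α) / ((k : ℝ) + 3)

def IsPageRank (k : ℕ) (α : ℝ) (π : Fin (k + 3) → ℝ) : Prop :=
  (∀ v, 0 ≤ π v) ∧ (∑ v, π v = 1) ∧ (PRmat k α).mulVec π = π

open Filter Topology

namespace PRvertex

def C1 (k : ℕ) : Fin (k + 3) := ⟨0, Nat.succ_pos _⟩

def C2 (k : ℕ) : Fin (k + 3) := ⟨1, Nat.one_lt_succ_succ _⟩

def A (k : ℕ) : Fin (k + 3) := Fin.last (k + 2)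

end PRvertex

open PRvertex

section Rows

variable (k : ℕ) (α : ℝ) (j : Fin (k + 3))

lemma PRmat_C2_apply : PRmat k α (C2 k) j = PRmat k α (C1 k) j := by
  have : PRadj k j 1 ↔ PRadj k j 0 := by unfold PRadj; omega
  exact if_congr this rfl rfl

lemma PRmat_C1_apply :
    PRmat k α (C1 k) j = (1 - α) / ((k : ℝ) + 3) + α / 3
      + (if j = C1 k then α / 6 else 0)
      - (if j = A k then α / 3 else 0) := by
  have hj := j.2
  have hC1 : (C1 k).val = 0 := rfl
  have hA : (A k).val = k + 2 := rfl
  unfold PRmat PRdeg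
  simp only [Fin.ext_iff]
  split_ifs <;> first | (unfold PRadj at *; omega) | (push_cast; ring)

lemma PRmat_chain_apply {i : ℕ} (hi : i < k) :
    PRmat k α ⟨i + 2, by omega⟩ j = (1 - α) / ((k : ℝ) + 3)
      + (if j = ⟨i + 1, by omega⟩ then α / 3 else 0) := by
  have hj := j.2
  unfold PRmat PRdeg
  simp only [Fin.ext_iff]
  split_ifs <;> first | (unfold PRadj at *; omega) | (push_cast; ring)

lemma PRmat_A_apply :
    PRmat k α (A k) j = (1 - α) / ((k : ℝ) + 3)
      + (if j = ⟨k + 1, by omega⟩ then α / 3 else 0)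
      + (if j = A k then α else 0) := by
  have hj := j.2
  have hA : (A k).val = k + 2 := rfl
  unfold PRmat PRdeg
  simp only [Fin.ext_iff]
  split_ifs <;> first | (unfold PRadj at *; omega) | (push_cast; ring)

end Rows

namespace IsPageRank

variable {k : ℕ} {α : ℝ} {π : Fin (k + 3) → ℝ}

lemma eq_sum (h : IsPageRank k α π) (i : Fin (k + 3)) : π i = ∑ j, PRmat k α i j * π j :=
  (congrFun h.2.2 i).symm

lemma C2_eq_C1 (h : IsPageRank k α π) : π (C2 k) = π (C1 k) := by
  rw [h.eq_sum (C2 k), h.eq_sum (C1 k)]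
  simp only [PRmat_C2_apply]

lemma C1_eq (h : IsPageRank k α π) :
    π (C1 k) = (1 - α) / ((k : ℝ) + 3) + α / 3 + α / 6 * π (C1 k)
      - α / 3 * π (A k) := by
  have := h.eq_sum (C1 k)
  simp only [PRmat_C1_apply, add_mul, sub_mul, ite_mul, zero_mul, Finset.sum_add_distrib,
    Finset.sum_sub_distrib, Finset.sum_ite_eq', Finset.mem_univ, if_true, ← Finset.mul_sum, h.2.1,
    mul_one] at this
  linarith

lemma chain_eq (h : IsPageRank k α π) {i : ℕ} (hi : i < k) :
    π ⟨i + 2, by omega⟩ = (1 - α) / ((k : ℝ) + 3) + α / 3 * π ⟨i + 1, by omega⟩ := by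
  have := h.eq_sum ⟨i + 2, by omega⟩
  simp only [PRmat_chain_apply k α _ hi, add_mul, ite_mul, zero_mul, Finset.sum_add_distrib,
    Finset.sum_ite_eq', Finset.mem_univ, if_true, ← Finset.mul_sum, h.2.1, mul_one] at this
  linarith

lemma A_eq (h : IsPageRank k α π) :
    π (A k) = (1 - α) / ((k : ℝ) + 3) + α / 3 * π ⟨k + 1, by omega⟩
      + α * π (A k) := by
  have := h.eq_sum (A k)
  simp only [PRmat_A_apply, add_mul, ite_mul, zero_mul, Finset.sum_add_distrib,
    Finset.sum_ite_eq', Finset.mem_univ, if_true, ← Finset.mul_sum, h.2.1, mul_one] at this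
  linarith

lemma C1_eq_div (h : IsPageRank k α π) (hα : α ≠ 6) :
    π (C1 k) = ((1 - α) / ((k : ℝ) + 3) + α / 3 - α / 3 * π (A k))
      / (1 - α / 6) := by
  have hα' : 1 - α / 6 ≠ 0 := by
    contrapose! hα
    linarith
  rw [eq_div_iff hα']
  linarith [h.C1_eq]

lemma chain_le (h : IsPageRank k α π) (hα : α ≤ 1) {n : ℕ} (hn : n ≤ k) :
    π ⟨n + 1, by omega⟩ ≤ (1 / 3) ^ n + 3 / 2 * ((1 - α) / ((k : ℝ) + 3)) := by
  induction n with
  | zero =>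
    have hs : 0 ≤ (1 - α) / ((k : ℝ) + 3) := div_nonneg (by linarith) (by positivity)
    calc π ⟨0 + 1, by omega⟩ ≤ ∑ j, π j :=
          Finset.single_le_sum (fun j _ => h.1 j) (Finset.mem_univ _)
      _ = 1 := h.2.1
      _ ≤ (1 / 3) ^ 0 + 3 / 2 * ((1 - α) / ((k : ℝ) + 3)) := by
          rw [pow_zero]
          linarith
  | succ n ih =>
    have hπ_nonneg := h.1 ⟨n + 1, by omega⟩
    calc π ⟨n + 1 + 1, by omega⟩
        = (1 - α) / ((k : ℝ) + 3) + α / 3 * π ⟨n + 1, by omega⟩ := h.chain_eq (by omega)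
      _ ≤ (1 - α) / ((k : ℝ) + 3) + 1 / 3 * π ⟨n + 1, by omega⟩ := by gcongr
      _ ≤ (1 - α) / ((k : ℝ) + 3)
            + 1 / 3 * ((1 / 3) ^ n + 3 / 2 * ((1 - α) / ((k : ℝ) + 3))) := by
          gcongr
          exact ih (by omega)
      _ = (1 / 3) ^ (n + 1) + 3 / 2 * ((1 - α) / ((k : ℝ) + 3)) := by ring

lemma one_sub_mul_A_le (h : IsPageRank k α π) (hα : α ≤ 1) :
    (1 - α) * π (A k) ≤ 3 / 2 * ((1 - α) / ((k : ℝ) + 3)) + (1 / 3) ^ (k + 1) := by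
  have hB := h.chain_le hα le_rfl
  have hB_nonneg := h.1 ⟨k + 1, by omega⟩
  calc (1 - α) * π (A k)
      = (1 - α) / ((k : ℝ) + 3) + α / 3 * π ⟨k + 1, by omega⟩ := by linarith [h.A_eq]
    _ ≤ (1 - α) / ((k : ℝ) + 3)
          + 1 / 3 * ((1 / 3) ^ k + 3 / 2 * ((1 - α) / ((k : ℝ) + 3))) := by
        gcongr
    _ = 3 / 2 * ((1 - α) / ((k : ℝ) + 3)) + (1 / 3) ^ (k + 1) := by ring

lemma A_le (hk : 1 ≤ k) (h : IsPageRank k (1 - 1 / k) π) :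
    π (A k) ≤ 3 / 2 * ((k : ℝ) + 3)⁻¹ + k * (1 / 3) ^ (k + 1) := by
  have hk' : (0 : ℝ) < k := by exact_mod_cast hk
  have key := h.one_sub_mul_A_le (by simp)
  rw [sub_sub_cancel] at key
  calc π (A k) = k * (1 / k * π (A k)) := by field_simp
    _ ≤ k * (3 / 2 * (1 / k / ((k : ℝ) + 3)) + (1 / 3) ^ (k + 1)) := by gcongr
    _ = 3 / 2 * ((k : ℝ) + 3)⁻¹ + k * (1 / 3) ^ (k + 1) := by field_simp

end IsPageRank

lemma tendsto_pageRank_A {π : ∀ k : ℕ, Fin (k + 3) → ℝ}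
    (hπ : ∀ᶠ k in atTop, IsPageRank k (1 - 1 / (k : ℝ)) (π k)) :
    Tendsto (fun k : ℕ => π k (A k)) atTop (𝓝 0) := by
  have hbound : Tendsto (fun k : ℕ => 3 / 2 * ((k : ℝ) + 3)⁻¹ + k * (1 / 3) ^ (k + 1)) atTop
      (𝓝 0) := by
    have hinv := (tendsto_atTop_add_const_right _ 3
      (tendsto_natCast_atTop_atTop (R := ℝ))).inv_tendsto_atTop
    have hgeom := (tendsto_self_mul_const_pow_of_lt_one (r := (1 / 3 : ℝ)) (by norm_num)
      (by norm_num)).mul_const (1 / 3)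
    simpa [pow_succ, mul_assoc] using (hinv.const_mul (3 / 2)).add hgeom
  refine tendsto_of_tendsto_of_tendsto_of_le_of_le' tendsto_const_nhds hbound ?_ ?_
  · filter_upwards [hπ] with k hk using hk.1 _
  · filter_upwards [hπ, eventually_ge_atTop 1] with k hk hk1 using hk.A_le hk1

lemma tendsto_pageRank_C1 {α : ℕ → ℝ} {π : ∀ k : ℕ, Fin (k + 3) → ℝ}
    (hπ : ∀ᶠ k in atTop, IsPageRank k (α k) (π k)) (hα : Tendsto α atTop (𝓝 1))
    (hA : Tendsto (fun k : ℕ => π k (A k)) atTop (𝓝 0)) :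
    Tendsto (fun k : ℕ => π k (C1 k)) atTop (𝓝 (2 / 5)) := by
  have hs : Tendsto (fun k : ℕ => (1 - α k) / ((k : ℝ) + 3)) atTop (𝓝 0) :=
    (hα.const_sub 1).div_atTop
      (tendsto_atTop_add_const_right _ 3 (tendsto_natCast_atTop_atTop (R := ℝ)))
  have hlim := ((hs.add (hα.div_const 3)).sub ((hα.div_const 3).mul hA)).div
    ((hα.div_const 6).const_sub 1) (by norm_num)
  rw [show (0 + 1 / 3 - 1 / 3 * 0) / (1 - 1 / 6) = (2 / 5 : ℝ) by norm_num] at hlim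
  refine hlim.congr' ?_
  filter_upwards [hπ, hα.eventually_ne (by norm_num : (1 : ℝ) ≠ 6)] with k hk hk6
  exact (hk.C1_eq_div hk6).symm

/-- If `π k` is the PageRank vector of `Γ(k)` for `α = 1 - 1/k` (for each `k ≥ 2`),
then `π(k)_{C1} → 2/5` and `π(k)_{C2} → 2/5` as `k → ∞`. -/
theorem pagerank_C1_C2_tendsto (π : ∀ k : ℕ, Fin (k + 3) → ℝ)
    (hπ : ∀ k, 2 ≤ k → IsPageRank k (1 - 1 / (k : ℝ)) (π k)) :
    Filter.Tendsto (fun k : ℕ => π k ⟨0, by omega⟩) Filter.atTop (nhds (2 / 5)) ∧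
    Filter.Tendsto (fun k : ℕ => π k ⟨1, by omega⟩) Filter.atTop (nhds (2 / 5)) := by
  have hπ' : ∀ᶠ k in atTop, IsPageRank k (1 - 1 / (k : ℝ)) (π k) := eventually_atTop.2 ⟨2, hπ⟩
  have hα : Tendsto (fun k : ℕ => 1 - 1 / (k : ℝ)) atTop (𝓝 1) := by
    simpa using tendsto_one_div_atTop_nhds_zero_nat.const_sub (1 : ℝ)
  have hC1 := tendsto_pageRank_C1 hπ' hα (tendsto_pageRank_A hπ')
  refine ⟨hC1, hC1.congr' ?_⟩
  filter_upwards [hπ'] with k hk using hk.C2_eq_C1.symm
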